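/- Let n be a nonnegative integer and a, b, c, d, e, f, p ∈ ℂ satisfying the Saalschütz-type condition d+e+f−a−b−c+n = 2. Assume ab + p(d−a−b−1) ≠ 0 and set γ = p(d−a−1)(d−b−1)/(ab + p(d−a−b−1)). Assume the parameters are nondegenerate for the identity below. Then ₅F₄(a, b, c, p+1, −n; d, e, f, p; 1) = ((e−c)_n (f−c)_n / ((e)_n (f)_n)) · ₅F₄(d−a−1, d−b−1, c, γ+1, −n; d, 1+c−e−n, 1+c−f−n, γ; 1). -/
import Mathlib

/-- Rising factorial (Pochhammer symbol) `(a)ₖ = a(a+1)⋯(a+k−1)`. -/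
noncomputable def poch (a : ℂ) (k : ℕ) : ℂ := (ascPochhammer ℂ k).eval a

/-- Terminating hypergeometric sum with numerator parameters `A` together with
the extra top parameter `-n`, denominator parameters `B`, and argument `x`. -/
noncomputable def hypTerm (A B : List ℂ) (n : ℕ) (x : ℂ) : ℂ :=
  ∑ k ∈ Finset.range (n + 1),
    ((A.map fun a => poch a k).prod * poch (-(n : ℂ)) k) /
      ((k.factorial : ℂ) * (B.map fun b => poch b k).prod) * x ^ k

lemma poch_zero (a : ℂ) : poch a 0 = 1 := by simp [poch]
lemma poch_succ (a : ℂ) (k : ℕ) : poch a (k+1) = poch a k * (a + k) := by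
  simp [poch, ascPochhammer_succ_right]
lemma poch_one (a : ℂ) : poch a 1 = a := by simp [poch]
lemma poch_succ_left (a : ℂ) (k : ℕ) : poch a (k+1) = a * poch (a+1) k := by
  induction k with
  | zero => simp [poch_succ, poch_zero]
  | succ k ih => rw [poch_succ, ih, poch_succ]; push_cast; ring
lemma poch_add (a : ℂ) (i j : ℕ) : poch a (i+j) = poch a i * poch (a+i) j := by
  induction j with
  | zero => simp [poch_zero]
  | succ j ih => rw [show i+(j+1) = (i+j)+1 by ring, poch_succ, ih, poch_succ]; push_cast; ring

lemma poch_reflect (a : ℂ) (k : ℕ) : poch a k = (-1)^k * poch (1 - a - k) k := by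
  induction k generalizing a with
  | zero => simp [poch_zero]
  | succ k ih =>
      have h1 : poch (1 - a - (k+1:ℕ)) (k+1) = (1 - a - (k+1:ℕ)) * poch (1 - a - k) k := by
        rw [poch_succ_left]
        congr 1
        push_cast; ring
      rw [poch_succ, h1, ih (a := a)]
      push_cast; ring

lemma poch_neg_nat_zero {k j : ℕ} (h : k < j) : poch (-(k:ℂ)) j = 0 := by
  have : j = k + 1 + (j - (k+1)) := by omega
  rw [this, poch_add, poch_succ]
  simp

lemma poch_ne_zero_of_le {a : ℂ} {n k : ℕ} (h : poch a n ≠ 0) (hk : k ≤ n) : poch a k ≠ 0 := by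
  have : n = k + (n - k) := by omega
  rw [this, poch_add, mul_ne_zero_iff] at h
  exact h.1

lemma poch_shift_ne_zero {a : ℂ} {n k : ℕ} (h : poch a n ≠ 0) (hk : k ≤ n) :
    poch (a + k) (n - k) ≠ 0 := by
  have : n = k + (n - k) := by omega
  rw [this, poch_add, mul_ne_zero_iff] at h
  exact h.2

lemma poch_neg_nat (j k : ℕ) :
    poch (-(k:ℂ)) j = (-1)^j * (Nat.choose k j) * (Nat.factorial j) := by
  induction j with
  | zero => simp [poch_zero]
  | succ j ih =>
      rw [poch_succ, ih]
      by_cases h : j < k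
      · have hc := Nat.choose_succ_right_eq k j
        have hc' : (Nat.choose k (j+1) : ℂ) * (j+1) = (Nat.choose k j) * ((k:ℂ) - j) := by
          have : ((Nat.choose k (j+1) * (j+1) : ℕ) : ℂ) = ((Nat.choose k j * (k - j) : ℕ) : ℂ) := by
            rw [hc]
          push_cast [Nat.cast_sub h.le] at this
          exact_mod_cast this
        rw [Nat.factorial_succ]
        push_cast
        linear_combination ((-1:ℂ))^j * (Nat.factorial j) * hc'
      · have hkj : k ≤ j := by omega
        rw [Nat.choose_eq_zero_of_lt (by omega : k < j+1)]
        rcases eq_or_lt_of_le hkj with rfl|h2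
        · simp
        · rw [Nat.choose_eq_zero_of_lt h2]; simp

noncomputable def sterm (m i : ℕ) (x y z : ℂ) : ℂ :=
  (Nat.choose m i) * poch x i * poch y i * poch (z-x-y) (m-i) * poch (z+i) (m-i)

noncomputable def fS (m : ℕ) (x y z : ℂ) : ℂ := ∑ i ∈ Finset.range (m+1), sterm m i x y z

lemma sterm_top (m : ℕ) (x y z : ℂ) : sterm m (m+1) x y z = 0 := by
  simp [sterm, Nat.choose_succ_self]

lemma pfaff_rec (m : ℕ) (x y z : ℂ) :
    fS (m+1) x y z = (z-x-y+m)*(z+m) * fS m x y z + x*y * fS m (x+1) (y+1) (z+1) := by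
  have hD : ∀ i ∈ Finset.range (m+1),
      sterm (m+1) (i+1) x y z - (z-x-y+m)*(z+m) * sterm m (i+1) x y z
        = x*y*sterm m i (x+1) (y+1) (z+1) := by
    intro i hi
    rw [Finset.mem_range] at hi
    rcases Nat.lt_or_ge i m with hlt | hge
    · obtain ⟨r, rfl⟩ : ∃ r, m = i + 1 + r := ⟨m - (i+1), by omega⟩
      have h1 : i + 1 + r + 1 - (i+1) = r + 1 := by omega
      have h2 : i + 1 + r - (i+1) = r := by omega
      have h3 : i + 1 + r - i = r + 1 := by omega
      simp only [sterm, h1, h2, h3]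
      push_cast
      have hP : (((i+1+r+1).choose (i+1) : ℕ) : ℂ)
          = ((i+1+r).choose i : ℕ) + (((i+1+r).choose (i+1) : ℕ) : ℂ) := by
        exact_mod_cast congrArg (Nat.cast (R := ℂ)) (Nat.choose_succ_succ (i+1+r) i)
      have hq0 : (i+1+r).choose (i+1) * (i+1) = (i+1+r).choose i * (r+1) := by
        have h := Nat.choose_succ_right_eq (i+1+r) i
        rwa [h3] at h
      have hQ : (((i+1+r).choose (i+1) : ℕ) : ℂ) * ((i:ℂ)+1)
          = (((i+1+r).choose i : ℕ) : ℂ) * ((r:ℂ)+1) := by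
        have h := congrArg (Nat.cast (R := ℂ)) hq0
        push_cast at h
        linear_combination h
      have E2 : poch (z + ((i:ℂ)+1)) (r+1) = poch (z + ((i:ℂ)+1)) r * (z + ((i:ℂ)+1) + r) :=
        poch_succ _ r
      have E3 : poch (z+1-(x+1)-(y+1)) (r+1) = (z-x-y-1) * poch (z-x-y) r := by
        rw [show z+1-(x+1)-(y+1) = (z-x-y-1) by ring, poch_succ_left]
        congr 1; ring
      have E4 : poch x (i+1) = x * poch (x+1) i := poch_succ_left x i
      have E5 : poch y (i+1) = y * poch (y+1) i := poch_succ_left y i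
      have E7 : poch (z + 1 + (i:ℂ)) (r+1) = poch (z + ((i:ℂ)+1)) r * (z + ((i:ℂ)+1) + r) := by
        rw [show z + 1 + (i:ℂ) = z + ((i:ℂ)+1) by ring]; exact poch_succ _ r
      have E1 : poch (z-x-y) (r+1) = poch (z-x-y) r * (z-x-y+r) := poch_succ _ r
      rw [E1, E2, E3, E4, E5, E7]
      linear_combination (x*y*poch (x+1) i*poch (y+1) i*poch (z-x-y) r*poch (z+((i:ℂ)+1)) r
        *(z+(i:ℂ)+1+(r:ℂ))) * ((z-x-y+(r:ℂ))*hP - hQ)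
    · have him : i = m := by omega
      subst him
      simp only [sterm, Nat.choose_succ_self, Nat.cast_zero, Nat.choose_self, Nat.cast_one]
      rw [show i+1-(i+1) = 0 by omega, show i - i = 0 by omega, show i - (i+1) = 0 by omega]
      simp only [poch_zero]
      rw [poch_succ_left x i, poch_succ_left y i]
      ring
  have hzero : sterm (m+1) 0 x y z - (z-x-y+m)*(z+m) * sterm m 0 x y z = 0 := by
    simp only [sterm, Nat.choose_zero_right, Nat.sub_zero, Nat.cast_one, Nat.cast_zero, add_zero]
    rw [poch_succ (z-x-y) m, poch_succ z m]
    simp only [poch_zero]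
    ring
  have hfm : ∑ i ∈ Finset.range (m+2), sterm m i x y z = fS m x y z := by
    rw [show m+2 = (m+1)+1 by rfl, Finset.sum_range_succ, sterm_top, add_zero]; rfl
  have key : fS (m+1) x y z - (z-x-y+m)*(z+m) * fS m x y z
      = ∑ i ∈ Finset.range (m+1), x*y*sterm m i (x+1) (y+1) (z+1) := by
    rw [fS, ← hfm, Finset.mul_sum, ← Finset.sum_sub_distrib, Finset.sum_range_succ',
      Finset.sum_congr rfl hD, hzero, add_zero]
  rw [← Finset.mul_sum] at key
  have h2 : (∑ i ∈ Finset.range (m+1), sterm m i (x+1) (y+1) (z+1)) = fS m (x+1) (y+1) (z+1) := rfl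
  rw [h2] at key
  linear_combination key

lemma saalschutz : ∀ (m : ℕ) (x y z : ℂ), fS m x y z = poch (z-x) m * poch (z-y) m := by
  intro m
  induction m with
  | zero => intro x y z; simp [fS, sterm, poch_zero]
  | succ m ih =>
      intro x y z
      rw [pfaff_rec, ih, ih, poch_succ, poch_succ]
      rw [show z+1-(x+1) = z-x by ring, show z+1-(y+1) = z-y by ring]
      push_cast
      ring

noncomputable def uterm (m i : ℕ) (x y z : ℂ) : ℂ :=
  (Nat.choose m i) * poch x i * poch y i * poch (z-x-y+1) (m-i) * poch (z+i) (m-i)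

noncomputable def uS (m : ℕ) (x y z : ℂ) : ℂ := ∑ i ∈ Finset.range (m+1), uterm m i x y z

lemma choose_succ_mul (k j : ℕ) (h : j ≤ k) :
    ((k:ℂ)+1-j) * ((k+1).choose j) = ((k:ℂ)+1) * (k.choose j) := by
  have h1 : (k+1).choose j * (k+1-j) = (k+1) * (k.choose j) := by
    have h2 := Nat.add_one_mul_choose_eq k (k-j)
    have h3 : Nat.choose k (k-j) = Nat.choose k j := Nat.choose_symm h
    have h4 : Nat.choose (k+1) (k-j+1) = Nat.choose (k+1) j := by
      rw [show k-j+1 = (k+1) - j by omega]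
      exact Nat.choose_symm (by omega)
    rw [h3, h4] at h2
    rw [show k+1-j = k-j+1 by omega]
    simpa using h2.symm
  have := congrArg (Nat.cast (R := ℂ)) h1
  push_cast [Nat.cast_sub (by omega : j ≤ k+1)] at this
  linear_combination this

lemma e1 (k : ℕ) (x y z : ℂ) :
    uS (k+1) x y z = ((k:ℂ)+1)*(z+k) * uS k x y z + fS (k+1) x y z := by
  have hterm : ∀ j ∈ Finset.range (k+2),
      uterm (k+1) j x y z - sterm (k+1) j x y z = ((k:ℂ)+1)*(z+k) * uterm k j x y z := by
    intro j hj
    rw [Finset.mem_range] at hj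
    rcases Nat.lt_or_ge j (k+1) with hlt | hge
    · have hjk : j ≤ k := by omega
      have h1 : k + 1 - j = (k - j) + 1 := by omega
      simp only [uterm, sterm, h1]
      have E1 : poch (z-x-y+1) (k-j+1) = poch (z-x-y+1) (k-j) * (z-x-y+1+(k-j:ℕ)) :=
        poch_succ _ _
      have E2 : poch (z-x-y) (k-j+1) = (z-x-y) * poch (z-x-y+1) (k-j) := poch_succ_left _ _
      have E3 : poch (z+j) (k-j+1) = poch (z+j) (k-j) * (z+j+(k-j:ℕ)) := poch_succ _ _
      have hc := choose_succ_mul k j hjk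
      rw [E1, E2, E3]
      have hcast : ((k:ℂ)-j) = ((k-j : ℕ) : ℂ) := by
        push_cast [Nat.cast_sub hjk]; ring
      rw [← hcast]
      linear_combination (poch x j * poch y j * poch (z-x-y+1) (k-j) * poch (z+j) (k-j)
        * (z+(j:ℂ)+((k:ℂ)-j))) * hc
    · have hj1 : j = k+1 := by omega
      subst hj1
      simp only [uterm, sterm, Nat.sub_self, poch_zero, Nat.choose_succ_self, Nat.cast_zero]
      ring
  have hsum := Finset.sum_congr rfl hterm
  rw [Finset.sum_sub_distrib] at hsum
  have huk : ∑ j ∈ Finset.range (k+2), uterm k j x y z = uS k x y z := by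
    rw [show k+2 = (k+1)+1 by rfl, Finset.sum_range_succ]
    simp [uS, uterm, Nat.choose_succ_self]
  rw [← Finset.mul_sum, huk] at hsum
  have : uS (k+1) x y z - fS (k+1) x y z = ((k:ℂ)+1)*(z+k) * uS k x y z := hsum
  linear_combination this

lemma succ_mul_choose_cast (k i : ℕ) :
    ((i:ℂ)+1) * ((k+1).choose (i+1)) = ((k:ℂ)+1) * (k.choose i) := by
  have := Nat.add_one_mul_choose_eq k i
  have h := congrArg (Nat.cast (R := ℂ)) this
  push_cast at h
  linear_combination -h

/-- The contiguous Saalschütz polynomial identity. -/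

lemma cs (k : ℕ) (a b d p : ℂ) :
    ∑ j ∈ Finset.range (k+1), (Nat.choose k j) * poch (d-a-1) j * poch (d-b-1) j *
        (p*(d-a-1)*(d-b-1) + j*(a*b + p*(d-a-b-1))) * poch (a+b+1-d) (k-j) * poch (d+j) (k-j)
      = poch a k * poch b k * (p + k) * ((d-a-1)*(d-b-1)) := by
  rcases k with _ | k
  · simp [poch_zero]; ring
  -- step 1 : termwise split
  have hA : ∀ j : ℕ, (d-a-1) * poch (d-a) j = poch (d-a-1) j * (d-a-1+j) := by
    intro j
    have h1 : poch (d-a-1) (j+1) = (d-a-1) * poch (d-a) j := by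
      rw [poch_succ_left, show d-a-1+1 = d-a by ring]
    rw [← h1, poch_succ]
  have hB : ∀ j : ℕ, (d-b-1) * poch (d-b) j = poch (d-b-1) j * (d-b-1+j) := by
    intro j
    have h1 : poch (d-b-1) (j+1) = (d-b-1) * poch (d-b) j := by
      rw [poch_succ_left, show d-b-1+1 = d-b by ring]
    rw [← h1, poch_succ]
  have step1 : ∀ j ∈ Finset.range (k+2),
      (Nat.choose (k+1) j : ℂ) * poch (d-a-1) j * poch (d-b-1) j *
        (p*(d-a-1)*(d-b-1) + j*(a*b + p*(d-a-b-1))) * poch (a+b+1-d) (k+1-j) * poch (d+j) (k+1-j)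
      = p*((d-a-1)*(d-b-1)) * uterm (k+1) j (d-a) (d-b) d
        - p * ((j:ℂ) * ((k+1).choose j) * poch (d-a-1) j * poch (d-b-1) j * (d-1+j)
            * poch (a+b+1-d) (k+1-j) * poch (d+j) (k+1-j))
        + a*b * ((j:ℂ) * ((k+1).choose j) * poch (d-a-1) j * poch (d-b-1) j
            * poch (a+b+1-d) (k+1-j) * poch (d+j) (k+1-j)) := by
    intro j _
    have hu : uterm (k+1) j (d-a) (d-b) d
        = ((k+1).choose j : ℂ) * poch (d-a) j * poch (d-b) j * poch (a+b+1-d) (k+1-j)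
          * poch (d+j) (k+1-j) := by
      rw [uterm, show d-(d-a)-(d-b)+1 = a+b+1-d by ring]
    rw [hu]
    linear_combination (-(p * ((k+1).choose j : ℂ) * poch (a+b+1-d) (k+1-j) * poch (d+j) (k+1-j)))
      * (((d-b-1) * poch (d-b) j) * hA j + (poch (d-a-1) j * (d-a-1+(j:ℂ))) * hB j)
  -- summed split
  have hsum1 : (∑ j ∈ Finset.range (k+2), (Nat.choose (k+1) j : ℂ) * poch (d-a-1) j * poch (d-b-1) j *
        (p*(d-a-1)*(d-b-1) + j*(a*b + p*(d-a-b-1))) * poch (a+b+1-d) (k+1-j) * poch (d+j) (k+1-j))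
      = p*((d-a-1)*(d-b-1)) * uS (k+1) (d-a) (d-b) d
        - p * (∑ j ∈ Finset.range (k+2), ((j:ℂ) * ((k+1).choose j) * poch (d-a-1) j * poch (d-b-1) j * (d-1+j)
            * poch (a+b+1-d) (k+1-j) * poch (d+j) (k+1-j)))
        + a*b * (∑ j ∈ Finset.range (k+2), ((j:ℂ) * ((k+1).choose j) * poch (d-a-1) j * poch (d-b-1) j
            * poch (a+b+1-d) (k+1-j) * poch (d+j) (k+1-j))) := by
    rw [Finset.sum_congr rfl step1, Finset.sum_add_distrib, Finset.sum_sub_distrib,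
      ← Finset.mul_sum, ← Finset.mul_sum, ← Finset.mul_sum]
    rfl
  have hA1 : ∀ i : ℕ, poch (d-a-1) (i+1) = (d-a-1) * poch (d-a) i := by
    intro i; rw [poch_succ_left, show d-a-1+1 = d-a by ring]
  have hB1 : ∀ i : ℕ, poch (d-b-1) (i+1) = (d-b-1) * poch (d-b) i := by
    intro i; rw [poch_succ_left, show d-b-1+1 = d-b by ring]
  have stepB : (∑ j ∈ Finset.range (k+2), ((j:ℂ) * ((k+1).choose j) * poch (d-a-1) j * poch (d-b-1) j * (d-1+j)
            * poch (a+b+1-d) (k+1-j) * poch (d+j) (k+1-j)))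
      = ((k:ℂ)+1)*(d+k)*((d-a-1)*(d-b-1)) * uS k (d-a) (d-b) d := by
    rw [Finset.sum_range_succ']
    have h0 : ((0:ℕ):ℂ) * ((k+1).choose 0) * poch (d-a-1) 0 * poch (d-b-1) 0 * (d-1+(0:ℕ))
        * poch (a+b+1-d) (k+1-0) * poch (d+(0:ℕ)) (k+1-0) = 0 := by
      simp
    rw [h0, add_zero, uS, Finset.mul_sum]
    apply Finset.sum_congr rfl
    intro i hi
    rw [Finset.mem_range] at hi
    have hik : i ≤ k := by omega
    have hsub : k + 1 - (i+1) = k - i := by omega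
    have hu : uterm k i (d-a) (d-b) d
        = (k.choose i : ℂ) * poch (d-a) i * poch (d-b) i * poch (a+b+1-d) (k-i)
          * poch (d+i) (k-i) := by
      rw [uterm, show d-(d-a)-(d-b)+1 = a+b+1-d by ring]
    have hW : (d+(i:ℂ)) * poch (d+(i:ℂ)+1) (k-i) = poch (d+(i:ℂ)) (k-i) * (d+(k:ℂ)) := by
      have e1 := poch_succ_left (d+(i:ℂ)) (k-i)
      have e2 := poch_succ (d+(i:ℂ)) (k-i)
      rw [← e1, e2, Nat.cast_sub hik]
      ring
    have harg : poch (d + ((i:ℕ)+1:ℕ)) (k-i) = poch (d+(i:ℂ)+1) (k-i) := by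
      congr 1; push_cast; ring
    rw [hsub, hu, hA1 i, hB1 i, harg]
    have hc := succ_mul_choose_cast k i
    push_cast
    linear_combination (((k:ℂ)+1) * (k.choose i : ℂ) * (d-a-1) * poch (d-a) i * (d-b-1) * poch (d-b) i
        * poch (a+b+1-d) (k-i)) * hW
      + ((d+(i:ℂ)) * poch (d+(i:ℂ)+1) (k-i) * (d-a-1) * poch (d-a) i * (d-b-1) * poch (d-b) i
        * poch (a+b+1-d) (k-i)) * hc
  have stepC : (∑ j ∈ Finset.range (k+2), ((j:ℂ) * ((k+1).choose j) * poch (d-a-1) j * poch (d-b-1) j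
            * poch (a+b+1-d) (k+1-j) * poch (d+j) (k+1-j)))
      = ((k:ℂ)+1)*((d-a-1)*(d-b-1)) * (poch (a+1) k * poch (b+1) k) := by
    rw [Finset.sum_range_succ']
    have h0 : ((0:ℕ):ℂ) * ((k+1).choose 0) * poch (d-a-1) 0 * poch (d-b-1) 0
        * poch (a+b+1-d) (k+1-0) * poch (d+(0:ℕ)) (k+1-0) = 0 := by
      simp
    have hfs : fS k (d-a) (d-b) (d+1) = poch (a+1) k * poch (b+1) k := by
      rw [saalschutz k (d-a) (d-b) (d+1), show d+1-(d-a) = a+1 by ring,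
        show d+1-(d-b) = b+1 by ring]
    rw [h0, add_zero, ← hfs, fS, Finset.mul_sum]
    apply Finset.sum_congr rfl
    intro i hi
    rw [Finset.mem_range] at hi
    have hik : i ≤ k := by omega
    have hsub : k + 1 - (i+1) = k - i := by omega
    have hst : sterm k i (d-a) (d-b) (d+1)
        = (k.choose i : ℂ) * poch (d-a) i * poch (d-b) i * poch (a+b+1-d) (k-i)
          * poch (d+1+(i:ℂ)) (k-i) := by
      rw [sterm, show d+1-(d-a)-(d-b) = a+b+1-d by ring]
    have harg : poch (d + ((i:ℕ)+1:ℕ)) (k-i) = poch (d+1+(i:ℂ)) (k-i) := by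
      congr 1; push_cast; ring
    rw [hsub, hst, hA1 i, hB1 i, harg]
    have hc := succ_mul_choose_cast k i
    push_cast
    linear_combination (poch (d-a) i * (d-a-1) * poch (d-b) i * (d-b-1)
        * poch (a+b+1-d) (k-i) * poch (d+1+(i:ℂ)) (k-i)) * hc
  rw [hsum1, stepB, stepC, e1 k (d-a) (d-b) d]
  have hfs2 : fS (k+1) (d-a) (d-b) d = poch a (k+1) * poch b (k+1) := by
    rw [saalschutz (k+1) (d-a) (d-b) d, show d-(d-a) = a by ring, show d-(d-b) = b by ring]
  rw [hfs2, poch_succ_left a k, poch_succ_left b k]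
  push_cast
  ring

lemma saal_div (m : ℕ) (x y z w : ℂ) (hw : w = 1+x+y-z-m)
    (hz : poch z m ≠ 0) (hwm : poch w m ≠ 0) :
    ∑ i ∈ Finset.range (m+1),
        poch x i * poch y i * poch (-(m:ℂ)) i / ((i.factorial : ℂ) * poch z i * poch w i)
      = (-1)^m * (poch (z-x) m * poch (z-y) m) / (poch z m * poch w m) := by
  have hterm : ∀ i ∈ Finset.range (m+1),
      poch x i * poch y i * poch (-(m:ℂ)) i / ((i.factorial : ℂ) * poch z i * poch w i)
        = (-1)^m * sterm m i x y z / (poch z m * poch w m) := by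
    intro i hi
    rw [Finset.mem_range] at hi
    obtain ⟨r, rfl⟩ : ∃ r, m = i + r := ⟨m - i, by omega⟩
    have hzi : poch z i ≠ 0 := poch_ne_zero_of_le hz (by omega)
    have hwi : poch w i ≠ 0 := poch_ne_zero_of_le hwm (by omega)
    have hfac : (Nat.factorial i : ℂ) ≠ 0 := by
      exact_mod_cast Nat.factorial_ne_zero i
    have hden1 : (Nat.factorial i : ℂ) * poch z i * poch w i ≠ 0 :=
      mul_ne_zero (mul_ne_zero hfac hzi) hwi
    have hden2 : poch z (i+r) * poch w (i+r) ≠ 0 := mul_ne_zero hz hwm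
    rw [div_eq_div_iff hden1 hden2]
    have hwr : poch (w+(i:ℂ)) r = (-1)^r * poch (z-x-y) r := by
      rw [poch_reflect (w+(i:ℂ)) r,
        show 1-(w+(i:ℂ))-(r:ℂ) = z-x-y by rw [hw]; push_cast; ring]
    rw [poch_neg_nat i (i+r), poch_add z i r, poch_add w i r, hwr,
      sterm, show i+r-i = r by omega, pow_add]
    ring
  rw [Finset.sum_congr rfl hterm, ← Finset.sum_div, ← Finset.mul_sum]
  rw [show (∑ i ∈ Finset.range (m+1), sterm m i x y z) = fS m x y z from rfl, saalschutz]

noncomputable def Aterm (n : ℕ) (a b c d e f γ : ℂ) (j k : ℕ) : ℂ :=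
  (-1)^j * poch (d-a-1) j * poch (d-b-1) j * poch (γ+1) j * poch (-(k:ℂ)) j
    * poch (a+b+1-d) (k-j) * poch c k * poch (-(n:ℂ)) k
    / ((j.factorial : ℂ) * poch d j * poch γ j * (k.factorial : ℂ) * poch e k * poch f k)

lemma row (n k : ℕ) (hk : k ≤ n) (a b c d e f p γ : ℂ)
    (hδ : a*b + p*(d-a-b-1) ≠ 0)
    (hγdef : γ = p*(d-a-1)*(d-b-1) / (a*b + p*(d-a-b-1)))
    (hp0 : p ≠ 0) (hγ0 : γ ≠ 0)
    (hdk : poch d k ≠ 0) (hek : poch e k ≠ 0) (hfk : poch f k ≠ 0)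
    (hpk : poch p k ≠ 0) (hγk : poch γ k ≠ 0) :
    ∑ j ∈ Finset.range (n+1), Aterm n a b c d e f γ j k
      = poch a k * poch b k * poch c k * poch (p+1) k * poch (-(n:ℂ)) k /
        ((k.factorial : ℂ) * (poch d k * poch e k * poch f k * poch p k)) := by
  have hγδ : γ * (a*b + p*(d-a-b-1)) = p*(d-a-1)*(d-b-1) := by
    rw [hγdef]; field_simp
  have hpAB : p*(d-a-1)*(d-b-1) ≠ 0 := by
    rw [← hγδ]; exact mul_ne_zero hγ0 hδ
  -- drop padding
  have hpad : ∑ j ∈ Finset.range (n+1), Aterm n a b c d e f γ j k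
      = ∑ j ∈ Finset.range (k+1), Aterm n a b c d e f γ j k := by
    symm
    apply Finset.sum_subset (by simp [Finset.range_subset]; omega)
    intro j _ hj
    rw [Finset.mem_range, not_lt] at hj
    have : poch (-(k:ℂ)) j = 0 := poch_neg_nat_zero (by omega)
    simp [Aterm, this]
  rw [hpad]
  -- termwise
  have hterm : ∀ j ∈ Finset.range (k+1),
      Aterm n a b c d e f γ j k
        = (poch c k * poch (-(n:ℂ)) k /
            ((k.factorial:ℂ) * poch e k * poch f k * poch d k * (p*(d-a-1)*(d-b-1))))
          * ((Nat.choose k j) * poch (d-a-1) j * poch (d-b-1) j *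
              (p*(d-a-1)*(d-b-1) + j*(a*b + p*(d-a-b-1))) * poch (a+b+1-d) (k-j)
              * poch (d+(j:ℕ)) (k-j)) := by
    intro j hj
    rw [Finset.mem_range] at hj
    have hjk : j ≤ k := by omega
    have hdj : poch d j ≠ 0 := poch_ne_zero_of_le hdk hjk
    have hγj : poch γ j ≠ 0 := poch_ne_zero_of_le hγk hjk
    have hjf : (j.factorial : ℂ) ≠ 0 := by exact_mod_cast Nat.factorial_ne_zero j
    have hkf : (k.factorial : ℂ) ≠ 0 := by exact_mod_cast Nat.factorial_ne_zero k
    have hγrel : γ * poch (γ+1) j = poch γ j * (γ+(j:ℂ)) := by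
      rw [← poch_succ_left γ j, poch_succ]
    have hdsplit : poch d k = poch d j * poch (d+(j:ℕ)) (k-j) := by
      rw [← poch_add, Nat.add_sub_cancel' hjk]
    have hsq : ((-1:ℂ))^j * (-1)^j = 1 := by
      rw [← pow_add, ← two_mul, pow_mul]; norm_num
    rw [Aterm, poch_neg_nat j k, div_mul_eq_mul_div,
      div_eq_div_iff
        (by exact mul_ne_zero (mul_ne_zero (mul_ne_zero (mul_ne_zero (mul_ne_zero hjf hdj) hγj) hkf) hek) hfk)
        (by exact mul_ne_zero (mul_ne_zero (mul_ne_zero (mul_ne_zero hkf hek) hfk) hdk) hpAB),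
      hdsplit]
    linear_combination
      (poch (d-a-1) j * poch (d-b-1) j * ((Nat.choose k j : ℕ):ℂ) * (j.factorial:ℂ)
        * poch (a+b+1-d) (k-j) * poch c k * poch (-(n:ℂ)) k * (k.factorial:ℂ) * poch e k * poch f k
        * poch d j * poch (d+(j:ℕ)) (k-j)) *
      ( (p*(d-a-1)*(d-b-1) * poch (γ+1) j) * hsq
        + ((a*b + p*(d-a-b-1))) * hγrel
        + ((poch γ j - poch (γ+1) j)) * hγδ )
  rw [Finset.sum_congr rfl hterm, ← Finset.mul_sum, cs k a b d p]
  -- final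
  have hprel : p * poch (p+1) k = poch p k * (p+(k:ℂ)) := by
    rw [← poch_succ_left p k, poch_succ]
  have hkf : (k.factorial : ℂ) ≠ 0 := by exact_mod_cast Nat.factorial_ne_zero k
  rw [div_mul_eq_mul_div, div_eq_div_iff
      (mul_ne_zero (mul_ne_zero (mul_ne_zero (mul_ne_zero hkf hek) hfk) hdk) hpAB)
      (by exact mul_ne_zero hkf (mul_ne_zero (mul_ne_zero (mul_ne_zero hdk hek) hfk) hpk))]
  linear_combination
    (-(poch a k * poch b k * poch c k * poch (-(n:ℂ)) k * (k.factorial:ℂ) * poch d k * poch e k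
      * poch f k * ((d-a-1)*(d-b-1)))) * hprel

lemma factorial_add_poch (j i : ℕ) :
    (((j+i).factorial : ℕ) : ℂ) = (j.factorial : ℂ) * poch ((j:ℂ)+1) i := by
  induction i with
  | zero => simp [poch_zero]
  | succ i ih =>
      rw [show j+(i+1) = (j+i)+1 by omega, Nat.factorial_succ, poch_succ]
      push_cast
      rw [ih]
      ring

lemma poch_neg_add (j i : ℕ) :
    poch (-((j+i:ℕ):ℂ)) j * (i.factorial : ℂ) = (-1)^j * ((j+i).factorial : ℂ) := by
  induction j with
  | zero => simp [poch_zero]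
  | succ j ih =>
      have harg : -(((j+1+i:ℕ)):ℂ) + 1 = -((j+i:ℕ):ℂ) := by push_cast; ring
      rw [poch_succ_left, harg, show j+1+i = (j+i)+1 by omega, Nat.factorial_succ]
      push_cast
      push_cast at ih
      linear_combination (-(j:ℂ)-1-(i:ℂ)) * ih

lemma col (n j : ℕ) (hj : j ≤ n) (a b c d e f γ : ℂ)
    (hsaal : d + e + f - a - b - c + (n : ℂ) = 2)
    (hen : poch e n ≠ 0) (hfn : poch f n ≠ 0)
    (hdj : poch d j ≠ 0) (hγj : poch γ j ≠ 0)
    (hEj : poch (1+c-e-(n:ℂ)) j ≠ 0) (hFj : poch (1+c-f-(n:ℂ)) j ≠ 0) :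
    ∑ k ∈ Finset.range (n+1), Aterm n a b c d e f γ j k
      = (poch (e-c) n * poch (f-c) n / (poch e n * poch f n)) *
        (poch (d-a-1) j * poch (d-b-1) j * poch c j * poch (γ+1) j * poch (-(n:ℂ)) j /
          ((j.factorial:ℂ) * poch d j * poch (1+c-e-(n:ℂ)) j * poch (1+c-f-(n:ℂ)) j * poch γ j)) := by
  have hjf : (j.factorial : ℂ) ≠ 0 := by exact_mod_cast Nat.factorial_ne_zero j
  have hej : poch e j ≠ 0 := poch_ne_zero_of_le hen hj
  have hfj : poch f j ≠ 0 := poch_ne_zero_of_le hfn hj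
  have hesplit : poch e n = poch e j * poch (e+(j:ℂ)) (n-j) := by
    rw [← poch_add, Nat.add_sub_cancel' hj]
  have hfsplit : poch f n = poch f j * poch (f+(j:ℂ)) (n-j) := by
    rw [← poch_add, Nat.add_sub_cancel' hj]
  have hez : poch (e+(j:ℂ)) (n-j) ≠ 0 := by
    rw [hesplit, mul_ne_zero_iff] at hen; exact hen.2
  have hfz : poch (f+(j:ℂ)) (n-j) ≠ 0 := by
    rw [hfsplit, mul_ne_zero_iff] at hfn; exact hfn.2
  -- restrict and reindex
  have h1 : ∑ k ∈ Finset.Ico j (n+1), Aterm n a b c d e f γ j k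
      = ∑ k ∈ Finset.range (n+1), Aterm n a b c d e f γ j k := by
    apply Finset.sum_subset
    · rw [Finset.range_eq_Ico]
      exact Finset.Ico_subset_Ico (Nat.zero_le j) le_rfl
    · intro k hkmem hk
      rw [Finset.mem_range] at hkmem
      simp only [Finset.mem_Ico, not_and, not_le] at hk
      have hlt : k < j := by
        by_contra h
        push_neg at h
        have := hk h
        omega
      simp [Aterm, poch_neg_nat_zero hlt]
  rw [← h1, Finset.sum_Ico_eq_sum_range, show n+1-j = (n-j)+1 by omega]
  have hterm : ∀ i ∈ Finset.range ((n-j)+1),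
      Aterm n a b c d e f γ j (j+i)
        = (poch (d-a-1) j * poch (d-b-1) j * poch (γ+1) j * poch c j * poch (-(n:ℂ)) j /
            ((j.factorial:ℂ) * poch d j * poch γ j * poch e j * poch f j))
          * (poch (c+(j:ℂ)) i * poch (a+b+1-d) i * poch (-(((n-j):ℕ):ℂ)) i /
              ((i.factorial:ℂ) * poch (e+(j:ℂ)) i * poch (f+(j:ℂ)) i)) := by
    intro i hi
    rw [Finset.mem_range] at hi
    have hin : i ≤ n - j := by omega
    have hce : poch c (j+i) = poch c j * poch (c+(j:ℂ)) i := poch_add c j i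
    have hne : poch (-(n:ℂ)) (j+i) = poch (-(n:ℂ)) j * poch (-(((n-j):ℕ):ℂ)) i := by
      rw [poch_add]
      congr 2
      push_cast [Nat.cast_sub hj]
      ring
    have hee : poch e (j+i) = poch e j * poch (e+(j:ℂ)) i := poch_add e j i
    have hfe : poch f (j+i) = poch f j * poch (f+(j:ℂ)) i := poch_add f j i
    have heiz : poch (e+(j:ℂ)) i ≠ 0 := poch_ne_zero_of_le hez hin
    have hfiz : poch (f+(j:ℂ)) i ≠ 0 := poch_ne_zero_of_le hfz hin
    have hif : (i.factorial : ℂ) ≠ 0 := by exact_mod_cast Nat.factorial_ne_zero i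
    have hjif : (((j+i).factorial : ℕ) : ℂ) ≠ 0 := by exact_mod_cast Nat.factorial_ne_zero (j+i)
    have hpn := poch_neg_add j i
    have hsq : ((-1:ℂ))^j * (-1)^j = 1 := by
      rw [← pow_add, ← two_mul, pow_mul]; norm_num
    have hden1 : (j.factorial:ℂ) * poch d j * poch γ j * ((j+i).factorial : ℂ)
        * (poch e j * poch (e+(j:ℂ)) i) * (poch f j * poch (f+(j:ℂ)) i) ≠ 0 :=
      mul_ne_zero (mul_ne_zero (mul_ne_zero (mul_ne_zero (mul_ne_zero hjf hdj) hγj) hjif)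
        (mul_ne_zero hej heiz)) (mul_ne_zero hfj hfiz)
    have hden2 : (j.factorial:ℂ) * poch d j * poch γ j * poch e j * poch f j
        * ((i.factorial:ℂ) * poch (e+(j:ℂ)) i * poch (f+(j:ℂ)) i) ≠ 0 :=
      mul_ne_zero (mul_ne_zero (mul_ne_zero (mul_ne_zero (mul_ne_zero hjf hdj) hγj) hej) hfj)
        (mul_ne_zero (mul_ne_zero hif heiz) hfiz)
    rw [Aterm, show j+i-j = i by omega, hce, hne, hee, hfe, div_mul_div_comm,
      div_eq_div_iff hden1 hden2]
    linear_combination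
      ((poch (d-a-1) j * poch (d-b-1) j * poch (γ+1) j * poch (a+b+1-d) i * poch c j
        * poch (c+(j:ℂ)) i * poch (-(n:ℂ)) j * poch (-(((n-j):ℕ):ℂ)) i * (j.factorial:ℂ)
        * poch d j * poch γ j * poch e j * poch f j * poch (e+(j:ℂ)) i * poch (f+(j:ℂ)) i)
        * ((-1:ℂ))^j) * hpn
      + ((poch (d-a-1) j * poch (d-b-1) j * poch (γ+1) j * poch (a+b+1-d) i * poch c j
        * poch (c+(j:ℂ)) i * poch (-(n:ℂ)) j * poch (-(((n-j):ℕ):ℂ)) i * (j.factorial:ℂ)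
        * poch d j * poch γ j * poch e j * poch f j * poch (e+(j:ℂ)) i * poch (f+(j:ℂ)) i)
        * ((j+i).factorial : ℂ)) * hsq
  rw [Finset.sum_congr rfl hterm, ← Finset.mul_sum]
  have hw : (f+(j:ℂ)) = 1+(c+(j:ℂ))+(a+b+1-d)-(e+(j:ℂ))-((n-j:ℕ):ℂ) := by
    push_cast [Nat.cast_sub hj]
    linear_combination hsaal
  rw [saal_div (n-j) (c+(j:ℂ)) (a+b+1-d) (e+(j:ℂ)) (f+(j:ℂ)) hw hez hfz]
  rw [show e+(j:ℂ)-(c+(j:ℂ)) = e-c by ring,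
    show e+(j:ℂ)-(a+b+1-d) = 1+c-f-(n:ℂ)+(j:ℂ) by linear_combination hsaal]
  -- final cleared comparison
  have hEC : poch (e-c) n = poch (e-c) (n-j) * poch ((e-c)+((n-j:ℕ):ℂ)) j := by
    rw [← poch_add, Nat.sub_add_cancel hj]
  have hFC : poch (f-c) n = (-1)^n * poch (1+c-f-(n:ℂ)) n := by
    rw [poch_reflect (f-c) n, show (1:ℂ)-(f-c)-(n:ℂ) = 1+c-f-(n:ℂ) by ring]
  have hFsplit : poch (1+c-f-(n:ℂ)) n
      = poch (1+c-f-(n:ℂ)) j * poch (1+c-f-(n:ℂ)+(j:ℂ)) (n-j) := by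
    rw [← poch_add, Nat.add_sub_cancel' hj]
  have hEref : poch (1+c-e-(n:ℂ)) j = (-1)^j * poch ((e-c)+((n-j:ℕ):ℂ)) j := by
    rw [poch_reflect (1+c-e-(n:ℂ)) j,
      show (1:ℂ)-(1+c-e-(n:ℂ))-(j:ℂ) = (e-c)+((n-j:ℕ):ℂ) by push_cast [Nat.cast_sub hj]; ring]
  have hsign : ((-1:ℂ))^(n-j) * ((-1:ℂ))^j = (-1)^n := by
    rw [← pow_add]; congr 1; omega
  rw [div_mul_div_comm, div_mul_div_comm,
    div_eq_div_iff
      (mul_ne_zero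
        (mul_ne_zero (mul_ne_zero (mul_ne_zero (mul_ne_zero hjf hdj) hγj) hej) hfj)
        (mul_ne_zero hez hfz))
      (mul_ne_zero (mul_ne_zero hen hfn)
        (mul_ne_zero (mul_ne_zero (mul_ne_zero (mul_ne_zero hjf hdj) hEj) hFj) hγj)),
    hesplit, hfsplit, hEC, hFC, hFsplit, hEref]
  linear_combination
    (poch (d-a-1) j * poch (d-b-1) j * poch c j * poch (γ+1) j * poch (-(n:ℂ)) j
      * poch (e-c) (n-j) * poch ((e-c)+((n-j:ℕ):ℂ)) j * poch (1+c-f-(n:ℂ)) j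
      * poch (1+c-f-(n:ℂ)+(j:ℂ)) (n-j) * (j.factorial:ℂ) * poch d j * poch γ j * poch e j
      * poch f j * poch (e+(j:ℂ)) (n-j) * poch (f+(j:ℂ)) (n-j)) * hsign


theorem corollary_1C12P2 (n : ℕ) (a b c d e f p : ℂ)
    (hsaal : d + e + f - a - b - c + (n : ℂ) = 2)
    (hγd : a * b + p * (d - a - b - 1) ≠ 0) (γ : ℂ)
    (hγ : γ = p * (d - a - 1) * (d - b - 1) / (a * b + p * (d - a - b - 1)))
    (hnd : ∀ z ∈ [d, e, f, p, 1 + c - e - (n : ℂ), 1 + c - f - (n : ℂ), γ],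
      ∀ k ≤ n, poch z k ≠ 0) :
    hypTerm [a, b, c, p + 1] [d, e, f, p] n 1
      = poch (e - c) n * poch (f - c) n / (poch e n * poch f n) *
        hypTerm [d - a - 1, d - b - 1, c, γ + 1]
          [d, 1 + c - e - (n : ℂ), 1 + c - f - (n : ℂ), γ] n 1 := by
  have hd := hnd d (by simp)
  have he := hnd e (by simp)
  have hf := hnd f (by simp)
  have hp := hnd p (by simp)
  have hE := hnd (1 + c - e - (n : ℂ)) (by simp)
  have hF := hnd (1 + c - f - (n : ℂ)) (by simp)
  have hγnd := hnd γ (by simp)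
  have hL : hypTerm [a, b, c, p + 1] [d, e, f, p] n 1
      = ∑ k ∈ Finset.range (n+1),
          poch a k * poch b k * poch c k * poch (p+1) k * poch (-(n:ℂ)) k /
            ((k.factorial : ℂ) * (poch d k * poch e k * poch f k * poch p k)) := by
    rw [hypTerm]
    apply Finset.sum_congr rfl
    intro k _
    simp only [List.map_cons, List.map_nil, List.prod_cons, List.prod_nil, one_pow, mul_one]
    ring
  have hR : hypTerm [d - a - 1, d - b - 1, c, γ + 1]
        [d, 1 + c - e - (n : ℂ), 1 + c - f - (n : ℂ), γ] n 1
      = ∑ j ∈ Finset.range (n+1),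
          poch (d-a-1) j * poch (d-b-1) j * poch c j * poch (γ+1) j * poch (-(n:ℂ)) j /
            ((j.factorial:ℂ) * poch d j * poch (1+c-e-(n:ℂ)) j * poch (1+c-f-(n:ℂ)) j
              * poch γ j) := by
    rw [hypTerm]
    apply Finset.sum_congr rfl
    intro k _
    simp only [List.map_cons, List.map_nil, List.prod_cons, List.prod_nil, one_pow, mul_one]
    ring
  rcases Nat.eq_zero_or_pos n with hn0 | hn1
  · subst hn0
    rw [hL, hR]
    simp [poch_zero]
  have hp0 : p ≠ 0 := by
    have := hp 1 hn1
    rwa [poch_one] at this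
  have hγ0 : γ ≠ 0 := by
    have := hγnd 1 hn1
    rwa [poch_one] at this
  rw [hL, hR]
  have hrows : ∀ k ∈ Finset.range (n+1),
      poch a k * poch b k * poch c k * poch (p+1) k * poch (-(n:ℂ)) k /
          ((k.factorial : ℂ) * (poch d k * poch e k * poch f k * poch p k))
        = ∑ j ∈ Finset.range (n+1), Aterm n a b c d e f γ j k := by
    intro k hk
    rw [Finset.mem_range] at hk
    have hkn : k ≤ n := by omega
    exact (row n k hkn a b c d e f p γ hγd hγ hp0 hγ0
      (hd k hkn) (he k hkn) (hf k hkn) (hp k hkn) (hγnd k hkn)).symm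
  rw [Finset.sum_congr rfl hrows, Finset.sum_comm]
  have hcols : ∀ j ∈ Finset.range (n+1),
      (∑ k ∈ Finset.range (n+1), Aterm n a b c d e f γ j k)
        = (poch (e-c) n * poch (f-c) n / (poch e n * poch f n)) *
          (poch (d-a-1) j * poch (d-b-1) j * poch c j * poch (γ+1) j * poch (-(n:ℂ)) j /
            ((j.factorial:ℂ) * poch d j * poch (1+c-e-(n:ℂ)) j * poch (1+c-f-(n:ℂ)) j
              * poch γ j)) := by
    intro j hj
    rw [Finset.mem_range] at hj
    have hjn : j ≤ n := by omega
    exact col n j hjn a b c d e f γ hsaal (he n le_rfl) (hf n le_rfl)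
      (hd j hjn) (hγnd j hjn) (hE j hjn) (hF j hjn)
  rw [Finset.sum_congr rfl hcols, ← Finset.mul_sum]
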